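/- arXiv:2204.10499 — 5 statements merged into one kernel-verified Lean document; each statement's English description precedes it below -/
import Mathlib

section
/- Squeeze law for statistical p-convergence: let (X, p, E) be a lattice-normed Riesz space and (xₙ), (yₙ), (zₙ) sequences in X with xₙ ≤ yₙ ≤ zₙ for all n. If xₙ and zₙ are both statistically p-convergent to x, then yₙ is statistically p-convergent to x. -/
open scoped Classical

/-- `K ⊆ ℕ` has natural density `d`. -/
def HasDensity (K : Set ℕ) (d : ℝ) : Prop :=
  Filter.Tendsto
    (fun n => (((Finset.range n).filter (fun k => k ∈ K)).card : ℝ) / n)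
    Filter.atTop (nhds d)

/-- Statistical p-convergence of a sequence `x` to `x₀` in a lattice-normed space `(X, p, E)`:
there is a sequence `q` in `E`, decreasing along an index set `K` of density 1 with infimum `0`,
dominating `p (x n - x₀)` on `K`. -/
def StatPConv {X E : Type*} [AddCommGroup X] [AddCommGroup E] [Lattice E]
    (p : X → E) (x : ℕ → X) (x₀ : X) : Prop :=
  ∃ (q : ℕ → E) (K : Set ℕ), HasDensity K 1 ∧
    (∀ m ∈ K, ∀ n ∈ K, m ≤ n → q n ≤ q m) ∧
    IsGLB (q '' K) 0 ∧
    ∀ n ∈ K, p (x n - x₀) ≤ q n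

/-!
Since `x n ≤ y n ≤ z n`, one has `|y n - a| ≤ |x n - a| + |z n - a|`, so monotonicity and
subadditivity of `p` give `p (y n - a) ≤ q₁ n + q₂ n` on `K₁ ∩ K₂`, which still has density one.
Along such a cofinal set `q₁` and `q₂` keep infimum `0`, and the sum of two decreasing
sequences has as infimum the sum of the infima.
-/

-- Counting through a definition in which `K` is a variable makes the (classical) decidability
-- instance of `k ∈ K₁ ∩ K₂` agree with the one inside `HasDensity (K₁ ∩ K₂) d`.
noncomputable def countBelow (K : Set ℕ) (n : ℕ) : ℕ :=
  ((Finset.range n).filter (fun k => k ∈ K)).card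

theorem hasDensity_iff_tendsto_countBelow {K : Set ℕ} {d : ℝ} :
    HasDensity K d ↔
      Filter.Tendsto (fun n => (countBelow K n : ℝ) / n) Filter.atTop (nhds d) :=
  Iff.rfl

theorem countBelow_le (K : Set ℕ) (n : ℕ) : countBelow K n ≤ n :=
  (Finset.card_filter_le _ _).trans (Finset.card_range n).le

theorem countBelow_mono {K L : Set ℕ} (hKL : K ⊆ L) (n : ℕ) : countBelow K n ≤ countBelow L n :=
  Finset.card_le_card fun k hk => by
    simp only [Finset.mem_filter] at hk ⊢
    exact ⟨hk.1, hKL hk.2⟩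

theorem countBelow_le_card_toFinset {K : Set ℕ} (hK : K.Finite) (n : ℕ) :
    countBelow K n ≤ hK.toFinset.card :=
  Finset.card_le_card fun _ hk => hK.mem_toFinset.mpr (Finset.mem_filter.mp hk).2

theorem countBelow_inter_add_countBelow_union (K₁ K₂ : Set ℕ) (n : ℕ) :
    countBelow (K₁ ∩ K₂) n + countBelow (K₁ ∪ K₂) n = countBelow K₁ n + countBelow K₂ n := by
  unfold countBelow
  refine Eq.trans ?_ (Finset.card_union_add_card_inter _ _)
  rw [add_comm]
  congr 2 <;> ext k <;>
    simp only [Finset.mem_filter, Finset.mem_union, Finset.mem_inter, Set.mem_inter_iff,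
      Set.mem_union] <;> tauto

namespace HasDensity

theorem infinite {K : Set ℕ} {d : ℝ} (h : HasDensity K d) (hd : d ≠ 0) : K.Infinite := by
  intro hK
  rw [hasDensity_iff_tendsto_countBelow] at h
  have hzero : Filter.Tendsto (fun n => (countBelow K n : ℝ) / n) Filter.atTop (nhds 0) :=
    tendsto_of_tendsto_of_tendsto_of_le_of_le tendsto_const_nhds
      (tendsto_const_div_atTop_nhds_zero_nat (hK.toFinset.card : ℝ))
      (fun n => by positivity)
      (fun n => div_le_div_of_nonneg_right
        (Nat.cast_le.mpr (countBelow_le_card_toFinset hK n)) n.cast_nonneg)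
  exact hd (tendsto_nhds_unique h hzero)

theorem isCofinal {K : Set ℕ} {d : ℝ} (h : HasDensity K d) (hd : d ≠ 0) : IsCofinal K :=
  fun n => (h.infinite hd).exists_gt n |>.imp fun _ ⟨hm, hlt⟩ => ⟨hm, hlt.le⟩

theorem one_inter {K₁ K₂ : Set ℕ} {d : ℝ} (h₁ : HasDensity K₁ 1) (h₂ : HasDensity K₂ d) :
    HasDensity (K₁ ∩ K₂) d := by
  rw [hasDensity_iff_tendsto_countBelow] at *
  have hlower := h₂.sub (tendsto_const_nhds (x := (1 : ℝ)) |>.sub h₁)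
  rw [sub_self, sub_zero] at hlower
  refine tendsto_of_tendsto_of_tendsto_of_le_of_le' hlower h₂ ?_ ?_
  · filter_upwards [Filter.eventually_ne_atTop 0] with n hn
    rw [sub_le_iff_le_add, one_sub_div (by exact_mod_cast hn), ← add_div]
    gcongr
    have hcount : countBelow K₂ n + countBelow K₁ n ≤ countBelow (K₁ ∩ K₂) n + n := by
      have := countBelow_inter_add_countBelow_union K₁ K₂ n
      have := countBelow_le (K₁ ∪ K₂) n
      omega
    have : (countBelow K₂ n : ℝ) + countBelow K₁ n ≤ countBelow (K₁ ∩ K₂) n + n := by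
      exact_mod_cast hcount
    linarith
  · exact Filter.Eventually.of_forall fun n => div_le_div_of_nonneg_right
      (Nat.cast_le.mpr (countBelow_mono Set.inter_subset_right n)) n.cast_nonneg

end HasDensity

theorem AntitoneOn.isGLB_image_of_isCofinalFor {ι α : Type*} [Preorder ι] [Preorder α]
    {f : ι → α} {s t : Set ι} {a : α} (hf : AntitoneOn f s) (ha : IsGLB (f '' s) a)
    (hts : t ⊆ s) (hst : IsCofinalFor s t) : IsGLB (f '' t) a := by
  refine ha.of_isCoinitialFor (Set.image_mono hts) ?_
  rintro _ ⟨i, hi, rfl⟩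
  obtain ⟨j, hj, hij⟩ := hst hi
  exact ⟨f j, Set.mem_image_of_mem f hj, hf hi (hts hj) hij⟩

theorem AntitoneOn.isGLB_image_add {ι E : Type*} [LinearOrder ι] [AddCommGroup E]
    [PartialOrder E] [AddLeftMono E] {f g : ι → E} {s : Set ι} {a b : E}
    (hf : AntitoneOn f s) (hg : AntitoneOn g s) (ha : IsGLB (f '' s) a)
    (hb : IsGLB (g '' s) b) : IsGLB ((fun i => f i + g i) '' s) (a + b) := by
  refine ⟨?_, fun c hc => ?_⟩
  · rintro _ ⟨i, hi, rfl⟩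
    exact add_le_add (ha.1 (Set.mem_image_of_mem f hi)) (hb.1 (Set.mem_image_of_mem g hi))
  -- `c - g j` bounds `f` below on `s`: compare `f i` and `g j` at the later index `max i j`.
  have hlower : ∀ j ∈ s, c - a ≤ g j := by
    intro j hj
    suffices c - g j ≤ a from sub_le_comm.mp this
    refine ha.2 ?_
    rintro _ ⟨i, hi, rfl⟩
    have hk : max i j ∈ s := by rcases max_choice i j with h | h <;> rwa [h]
    calc c - g j ≤ f (max i j) + g (max i j) - g j :=
          sub_le_sub_right (hc (Set.mem_image_of_mem _ hk)) _
      _ ≤ f i + g j - g j := by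
          gcongr
          exacts [hf hi hk (le_max_left i j), hg hj hk (le_max_right i j)]
      _ = f i := add_sub_cancel_right _ _
  have : c - a ≤ b := hb.2 (by rintro _ ⟨j, hj, rfl⟩; exact hlower j hj)
  exact sub_le_iff_le_add'.mp this

theorem abs_le_abs_add_abs_of_le_of_le {α : Type*} [Lattice α] [AddCommGroup α] [AddLeftMono α]
    {a b c : α} (hab : a ≤ b) (hbc : b ≤ c) : |b| ≤ |a| + |c| :=
  abs_le'.mpr
    ⟨hbc.trans ((le_abs_self c).trans (le_add_of_nonneg_left (abs_nonneg a))),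
      (neg_le_neg_iff.mpr hab).trans
        ((neg_le_abs a).trans (le_add_of_nonneg_right (abs_nonneg c)))⟩

theorem apply_le_add_of_le_of_le {X E : Type*} [Lattice X] [AddCommGroup X] [AddLeftMono X]
    [AddCommMonoid E] [Preorder E] [AddLeftMono E] {p : X → E}
    (hptri : ∀ v w : X, p (v + w) ≤ p v + p w) (hpmono : ∀ v w : X, |v| ≤ |w| → p v ≤ p w)
    {u v w : X} (huv : u ≤ v) (hvw : v ≤ w) : p v ≤ p u + p w :=
  calc p v ≤ p (|u| + |w|) :=
        hpmono _ _ ((abs_le_abs_add_abs_of_le_of_le huv hvw).trans (le_abs_self _))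
    _ ≤ p |u| + p |w| := hptri _ _
    _ ≤ p u + p w := add_le_add (hpmono _ _ (abs_abs u).le) (hpmono _ _ (abs_abs w).le)

theorem statPConv_squeeze_general {X E : Type*} [AddCommGroup X] [Lattice X] [CovariantClass X X (· + ·) (· ≤ ·)]
    [AddCommGroup E] [Lattice E] [CovariantClass E E (· + ·) (· ≤ ·)]
    (p : X → E)
    (hptri : ∀ v w : X, p (v + w) ≤ p v + p w)
    (hpmono : ∀ v w : X, |v| ≤ |w| → p v ≤ p w)
    (x y z : ℕ → X) (a : X)
    (hord : ∀ n, x n ≤ y n ∧ y n ≤ z n)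
    (hx : StatPConv p x a) (hz : StatPConv p z a) :
    StatPConv p y a := by
  obtain ⟨q₁, K₁, hK₁, hq₁, hglb₁, hx⟩ := hx
  obtain ⟨q₂, K₂, hK₂, hq₂, hglb₂, hz⟩ := hz
  have hK : HasDensity (K₁ ∩ K₂) 1 := hK₁.one_inter hK₂
  have hcof : ∀ K : Set ℕ, IsCofinalFor K (K₁ ∩ K₂) := fun _ n _ => hK.isCofinal one_ne_zero n
  have hq₁' : AntitoneOn q₁ (K₁ ∩ K₂) := AntitoneOn.mono hq₁ Set.inter_subset_left
  have hq₂' : AntitoneOn q₂ (K₁ ∩ K₂) := AntitoneOn.mono hq₂ Set.inter_subset_right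
  have hglb₁' := AntitoneOn.isGLB_image_of_isCofinalFor hq₁ hglb₁ Set.inter_subset_left (hcof K₁)
  have hglb₂' := AntitoneOn.isGLB_image_of_isCofinalFor hq₂ hglb₂ Set.inter_subset_right (hcof K₂)
  refine ⟨fun n => q₁ n + q₂ n, K₁ ∩ K₂, hK, hq₁'.add hq₂', ?_, fun n hn => ?_⟩
  · simpa using hq₁'.isGLB_image_add hq₂' hglb₁' hglb₂'
  · calc p (y n - a) ≤ p (x n - a) + p (z n - a) :=
          apply_le_add_of_le_of_le hptri hpmono (sub_le_sub_right (hord n).1 a)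
            (sub_le_sub_right (hord n).2 a)
      _ ≤ q₁ n + q₂ n := add_le_add (hx n hn.1) (hz n hn.2)

/-- Squeeze law for statistical p-convergence in a lattice-normed Riesz space. -/
theorem statPConv_squeeze {X E : Type*} [AddCommGroup X] [Lattice X] [CovariantClass X X (· + ·) (· ≤ ·)] [Module ℝ X]
    [AddCommGroup E] [Lattice E] [CovariantClass E E (· + ·) (· ≤ ·)] [Module ℝ E]
    (p : X → E)
    (hp0 : ∀ v : X, 0 ≤ p v)
    (hpeq : ∀ v : X, p v = 0 ↔ v = 0)
    (hpsmul : ∀ (c : ℝ) (v : X), p (c • v) = |c| • p v)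
    (hptri : ∀ v w : X, p (v + w) ≤ p v + p w)
    (hpmono : ∀ v w : X, |v| ≤ |w| → p v ≤ p w)
    (x y z : ℕ → X) (a : X)
    (hord : ∀ n, x n ≤ y n ∧ y n ≤ z n)
    (hx : StatPConv p x a) (hz : StatPConv p z a) :
    StatPConv p y a :=
  statPConv_squeeze_general p hptri hpmono x y z a hord hx hz
end

section
/- Every monotone decreasing sequence that is statistically p-convergent order converges (in fact decreases) to its statistical p-limit: if xₙ ↓ (decreasing) in a lattice-normed Riesz space and xₙ →(st_p) x, then xₙ ↓ x, i.e., x = inf xₙ. -/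
open scoped Classical

/-!
The index set `K` of a statistical p-convergence has density 1, so it is unbounded. Along `K`
the dominating sequence `q` decreases to `0`, hence anything that eventually lies below
`|x l - a|` has `p`-norm at most `0` and is therefore `≤ 0`. For a decreasing sequence this
applies both to `a - x k` (so `a` is a lower bound) and to `b - a` for any lower bound `b`.
-/

open Filter

theorem hasDensity_zero_of_subset_Iio {K : Set ℕ} {n : ℕ} (hK : K ⊆ Set.Iio n) :
    HasDensity K 0 := by
  refine tendsto_of_tendsto_of_tendsto_of_le_of_le' tendsto_const_nhds
    (tendsto_const_div_atTop_nhds_zero_nat (n : ℝ)) (Eventually.of_forall fun m => by positivity) ?_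
  filter_upwards with m
  gcongr
  refine (Finset.card_le_card fun k hk => ?_).trans (Finset.card_range n).le
  simpa using hK (Finset.mem_filter.1 hk).2

theorem HasDensity.exists_mem_ge {K : Set ℕ} {d : ℝ} (hK : HasDensity K d) (hd : d ≠ 0)
    (n : ℕ) : ∃ k ∈ K, n ≤ k := by
  by_contra! h
  exact hd (tendsto_nhds_unique hK (hasDensity_zero_of_subset_Iio h))

theorem IsGLB.le_of_forall_ge_le {E : Type*} [Preorder E] {q : ℕ → E} {K : Set ℕ} {g c : E}
    (hglb : IsGLB (q '' K) g) (hq : AntitoneOn q K) (hK : ∀ n, ∃ k ∈ K, n ≤ k) {k : ℕ}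
    (hc : ∀ l ∈ K, k ≤ l → c ≤ q l) : c ≤ g := by
  refine hglb.2 ?_
  rintro _ ⟨m, hm, rfl⟩
  obtain ⟨l, hl, hkml⟩ := hK (max k m)
  exact (hc l hl (le_of_max_le_left hkml)).trans (hq hm hl (le_of_max_le_right hkml))

namespace StatPConv

variable {X E : Type*} [AddCommGroup X] [Lattice X] [AddCommGroup E] [Lattice E]
  {p : X → E} {x : ℕ → X} {a : X}

theorem eq_zero_of_eventually_abs_le (hx : StatPConv p x a) (hp0 : ∀ v, 0 ≤ p v)
    (hpeq : ∀ v, p v = 0 → v = 0) (hpmono : ∀ v w : X, |v| ≤ |w| → p v ≤ p w) {y : X}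
    (hy : ∀ᶠ l in atTop, |y| ≤ |x l - a|) : y = 0 := by
  obtain ⟨q, K, hK, hq, hglb, hdom⟩ := hx
  obtain ⟨k, hk⟩ := eventually_atTop.1 hy
  have hpy : p y ≤ 0 := hglb.le_of_forall_ge_le hq (hK.exists_mem_ge one_ne_zero)
    fun l hl hkl => (hpmono _ _ (hk l hkl)).trans (hdom l hl)
  exact hpeq y (le_antisymm hpy (hp0 y))

theorem nonpos_of_eventually_le_abs [AddLeftMono X] (hx : StatPConv p x a) (hp0 : ∀ v, 0 ≤ p v)
    (hpeq : ∀ v, p v = 0 → v = 0) (hpmono : ∀ v w : X, |v| ≤ |w| → p v ≤ p w) {y : X}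
    (hy : ∀ᶠ l in atTop, y ≤ |x l - a|) : y ≤ 0 := by
  refine posPart_eq_zero.1 (hx.eq_zero_of_eventually_abs_le hp0 hpeq hpmono ?_)
  filter_upwards [hy] with l hl
  rw [abs_of_nonneg (posPart_nonneg y)]
  exact sup_le hl (abs_nonneg _)

end StatPConv

theorem statPConv_antitone_isGLB_general {X E : Type*} [AddCommGroup X] [Lattice X] [CovariantClass X X (· + ·) (· ≤ ·)]
    [AddCommGroup E] [Lattice E]
    (p : X → E)
    (hp0 : ∀ v : X, 0 ≤ p v)
    (hpeq : ∀ v : X, p v = 0 ↔ v = 0)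
    (hpmono : ∀ v w : X, |v| ≤ |w| → p v ≤ p w)
    (x : ℕ → X) (a : X) (hdec : Antitone x) (hx : StatPConv p x a) :
    IsGLB (Set.range x) a := by
  have hle : ∀ y, (∀ᶠ l in atTop, y ≤ |x l - a|) → y ≤ 0 := fun _ =>
    hx.nonpos_of_eventually_le_abs hp0 (fun v => (hpeq v).1) hpmono
  refine ⟨?_, fun b hb => sub_nonpos.1 (hle _ (Eventually.of_forall fun l => ?_))⟩
  · rintro _ ⟨k, rfl⟩
    refine sub_nonpos.1 (hle _ ?_)
    filter_upwards [eventually_ge_atTop k] with l hkl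
    calc a - x k ≤ a - x l := sub_le_sub_left (hdec hkl) a
      _ ≤ |x l - a| := abs_sub_comm (x l) a ▸ le_abs_self _
  · exact (sub_le_sub_right (hb ⟨l, rfl⟩) a).trans (le_abs_self _)

/-- A monotone decreasing, statistically p-convergent sequence decreases to its
statistical p-limit: `x ↓ a`, i.e. `a = inf (x n)`. -/
theorem statPConv_antitone_isGLB {X E : Type*} [AddCommGroup X] [Lattice X] [CovariantClass X X (· + ·) (· ≤ ·)] [Module ℝ X]
    [AddCommGroup E] [Lattice E] [CovariantClass E E (· + ·) (· ≤ ·)] [Module ℝ E]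
    (p : X → E)
    (hp0 : ∀ v : X, 0 ≤ p v)
    (hpeq : ∀ v : X, p v = 0 ↔ v = 0)
    (hpsmul : ∀ (c : ℝ) (v : X), p (c • v) = |c| • p v)
    (hptri : ∀ v w : X, p (v + w) ≤ p v + p w)
    (hpmono : ∀ v w : X, |v| ≤ |w| → p v ≤ p w)
    (x : ℕ → X) (a : X) (hdec : Antitone x) (hx : StatPConv p x a) :
    IsGLB (Set.range x) a :=
  statPConv_antitone_isGLB_general p hp0 hpeq hpmono x a hdec hx
end

section
/- In a lattice-normed Riesz space (X, p, E), the following are equivalent: (i) every statistically order convergent sequence with limit 0 in X is statistically p-convergent to 0; (ii) every order convergent sequence with limit 0 in X is statistically p-convergent to 0. -/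
open scoped Classical

/-!
Direction (i) ⇒ (ii) is immediate: an order null sequence is statistically order null along
the whole of `ℕ`. For (ii) ⇒ (i), let `|x n| ≤ t n` on a set `K` of density one along which `t`
decreases to `0`. Since `K` is infinite, `t` extends to a decreasing sequence on `ℕ` with the
same set of values, by freezing it at the next element of `K`; this sequence dominates the
sequence `x` cut off outside `K`, which is therefore order null and so, by (ii), statistically
`p`-null. As it agrees with `x` on `K`, so is `x`.
-/

open Set Filter

theorem hasDensity_iff_tendsto_count {K : Set ℕ} {d : ℝ} [DecidablePred (· ∈ K)] :
    HasDensity K d ↔ Tendsto (fun n => (Nat.count (· ∈ K) n : ℝ) / n) atTop (nhds d) := by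
  simp only [HasDensity, Nat.count_eq_card_filter_range]
  congr!

theorem Nat.count_add_count_le_add_count_inter (K L : Set ℕ) (n : ℕ) :
    Nat.count (· ∈ K) n + Nat.count (· ∈ L) n ≤ n + Nat.count (· ∈ K ∩ L) n := by
  induction n with
  | zero => simp
  | succ n ih =>
    have hstep : (if n ∈ K then 1 else 0) + (if n ∈ L then 1 else 0) ≤
        1 + if n ∈ K ∩ L then 1 else 0 := by
      by_cases n ∈ K <;> by_cases n ∈ L <;> simp [*]
    rw [Nat.count_succ, Nat.count_succ, Nat.count_succ]
    omega

theorem HasDensity.infinite_s14 {K : Set ℕ} {d : ℝ} (hK : HasDensity K d) (hd : d ≠ 0) :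
    K.Infinite := by
  intro hfin
  have hzero : Tendsto (fun n => (Nat.count (· ∈ K) n : ℝ) / n) atTop (nhds 0) :=
    squeeze_zero (fun n => by positivity)
      (fun n => div_le_div_of_nonneg_right
        (Nat.cast_le.2 (Nat.count_le_card (p := (· ∈ K)) hfin n)) n.cast_nonneg)
      (tendsto_const_div_atTop_nhds_zero_nat _)
  exact hd (tendsto_nhds_unique (hasDensity_iff_tendsto_count.1 hK) hzero)

theorem hasDensity_univ : HasDensity (univ : Set ℕ) 1 := by
  rw [hasDensity_iff_tendsto_count]
  refine tendsto_const_nhds.congr' ?_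
  filter_upwards [eventually_ne_atTop 0] with n hn
  rw [(Nat.count_iff_forall (p := (· ∈ univ))).2 fun k _ => mem_univ k,
    div_self (Nat.cast_ne_zero.2 hn)]

theorem HasDensity.inter {K L : Set ℕ} {d : ℝ} (hK : HasDensity K 1) (hL : HasDensity L d) :
    HasDensity (K ∩ L) d := by
  rw [hasDensity_iff_tendsto_count] at *
  have hlower := (hK.add hL).sub_const 1
  rw [add_sub_cancel_left] at hlower
  refine tendsto_of_tendsto_of_tendsto_of_le_of_le hlower hL (fun n => ?_) (fun n => ?_)
  · have hcount : (Nat.count (· ∈ K) n : ℝ) + Nat.count (· ∈ L) n - n ≤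
        Nat.count (· ∈ K ∩ L) n := by
      rw [sub_le_iff_le_add']
      exact_mod_cast Nat.count_add_count_le_add_count_inter K L n
    -- not `n / n = 1`: it fails for `n = 0`
    calc (Nat.count (· ∈ K) n : ℝ) / n + Nat.count (· ∈ L) n / n - 1
        ≤ (Nat.count (· ∈ K) n : ℝ) / n + Nat.count (· ∈ L) n / n - n / n := by
          gcongr; exact div_self_le_one _
      _ = ((Nat.count (· ∈ K) n : ℝ) + Nat.count (· ∈ L) n - n) / n := by ring
      _ ≤ _ := div_le_div_of_nonneg_right hcount n.cast_nonneg
  · exact div_le_div_of_nonneg_right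
      (Nat.cast_le.2 (Nat.count_mono_left fun k _ (hk : k ∈ K ∩ L) => hk.2)) n.cast_nonneg

theorem IsGLB.image_of_cofinal {ι α : Type*} [Preorder ι] [Preorder α] {K L : Set ι}
    {q : ι → α} {a : α} (h : IsGLB (q '' K) a) (hq : AntitoneOn q K) (hLK : L ⊆ K)
    (hL : ∀ k ∈ K, ∃ l ∈ L, k ≤ l) : IsGLB (q '' L) a := by
  refine ⟨lowerBounds_mono_set (image_mono hLK) h.1, fun b hb => h.2 ?_⟩
  rintro _ ⟨k, hk, rfl⟩
  obtain ⟨l, hl, hkl⟩ := hL k hk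
  exact (hb (mem_image_of_mem q hl)).trans (hq hk (hLK hl) hkl)

theorem AntitoneOn.exists_antitone_range_eq_image {α : Type*} [Preorder α] {K : Set ℕ}
    {t : ℕ → α} (ht : AntitoneOn t K) (hK : K.Infinite) :
    ∃ t' : ℕ → α, Antitone t' ∧ range t' = t '' K ∧ EqOn t' t K := by
  have hnext : ∀ n, ∃ k, k ∈ K ∧ n ≤ k := fun n =>
    (hK.exists_gt n).imp fun _ hk => ⟨hk.1, hk.2.le⟩
  let σ n := Nat.find (hnext n)
  have hσK : ∀ n, σ n ∈ K := fun n => (Nat.find_spec (hnext n)).1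
  have hσ_mono : Monotone σ := fun m n hmn => Nat.find_mono fun k hk => ⟨hk.1, hmn.trans hk.2⟩
  have hσ_fix : ∀ n ∈ K, σ n = n := fun n hn =>
    le_antisymm (Nat.find_min' _ ⟨hn, le_rfl⟩) (Nat.find_spec (hnext n)).2
  have hσ_range : range σ = K :=
    (range_subset_iff.2 hσK).antisymm fun n hn => ⟨n, hσ_fix n hn⟩
  exact ⟨t ∘ σ, fun m n hmn => ht (hσK m) (hσK n) (hσ_mono hmn),
    by rw [range_comp, hσ_range], fun n hn => congrArg t (hσ_fix n hn)⟩

theorem StatPConv.congr_of_eqOn {X E : Type*} [AddCommGroup X] [AddCommGroup E] [Lattice E]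
    {p : X → E} {x y : ℕ → X} {x₀ : X} {K : Set ℕ} (h : StatPConv p x x₀)
    (hK : HasDensity K 1) (hxy : EqOn x y K) : StatPConv p y x₀ := by
  obtain ⟨q, L, hL, hqL, hglb, hle⟩ := h
  have hKL := hK.inter hL
  refine ⟨q, K ∩ L, hKL, AntitoneOn.mono hqL inter_subset_right,
    hglb.image_of_cofinal hqL inter_subset_right fun l _ => ?_,
    fun n hn => hxy hn.1 ▸ hle n hn.2⟩
  exact ((hKL.infinite_s14 one_ne_zero).exists_gt l).imp fun _ hk => ⟨hk.1, hk.2.le⟩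

theorem statOrderConv_to_statPConv_iff_orderConv_general {X E : Type*} [AddCommGroup X] [Lattice X]
    [AddCommGroup E] [Lattice E]
    (p : X → E) :
    (∀ x : ℕ → X,
        (∃ (t : ℕ → X) (K : Set ℕ), HasDensity K 1 ∧
          (∀ m ∈ K, ∀ n ∈ K, m ≤ n → t n ≤ t m) ∧
          IsGLB (t '' K) 0 ∧ ∀ n ∈ K, |x n| ≤ t n) →
        StatPConv p x 0) ↔
      (∀ x : ℕ → X,
        (∃ t : ℕ → X, Antitone t ∧ IsGLB (Set.range t) 0 ∧ ∀ n, |x n| ≤ t n) →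
        StatPConv p x 0) := by
  refine ⟨fun H x ⟨t, ht, hglb, hle⟩ => H x ⟨t, univ, hasDensity_univ, ht.antitoneOn _,
    by rwa [image_univ], fun n _ => hle n⟩, fun H x ⟨t, K, hK, htK, hglb, hle⟩ => ?_⟩
  obtain ⟨t', ht', hrange, heq⟩ :=
    (show AntitoneOn t K from htK).exists_antitone_range_eq_image (hK.infinite_s14 one_ne_zero)
  rw [← hrange] at hglb
  have hcut : ∀ n, |K.indicator x n| ≤ t' n := fun n => by
    by_cases hn : n ∈ K
    · rw [indicator_of_mem hn, heq hn]
      exact hle n hn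
    · rw [indicator_of_notMem hn, abs, neg_zero, sup_idem]
      exact hglb.1 (mem_range_self n)
  exact (H _ ⟨t', ht', hglb, hcut⟩).congr_of_eqOn hK fun n hn => indicator_of_mem hn x

/-- In a lattice-normed Riesz space the following are equivalent:
(i) every statistically order convergent to 0 sequence is statistically p-convergent to 0;
(ii) every order convergent to 0 sequence is statistically p-convergent to 0. -/
theorem statOrderConv_to_statPConv_iff_orderConv {X E : Type*} [AddCommGroup X] [Lattice X] [CovariantClass X X (· + ·) (· ≤ ·)] [Module ℝ X]
    [AddCommGroup E] [Lattice E] [CovariantClass E E (· + ·) (· ≤ ·)] [Module ℝ E]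
    (p : X → E)
    (hp0 : ∀ v : X, 0 ≤ p v)
    (hpeq : ∀ v : X, p v = 0 ↔ v = 0)
    (hpsmul : ∀ (c : ℝ) (v : X), p (c • v) = |c| • p v)
    (hptri : ∀ v w : X, p (v + w) ≤ p v + p w)
    (hpmono : ∀ v w : X, |v| ≤ |w| → p v ≤ p w) :
    (∀ x : ℕ → X,
        (∃ (t : ℕ → X) (K : Set ℕ), HasDensity K 1 ∧
          (∀ m ∈ K, ∀ n ∈ K, m ≤ n → t n ≤ t m) ∧
          IsGLB (t '' K) 0 ∧ ∀ n ∈ K, |x n| ≤ t n) →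
        StatPConv p x 0) ↔
      (∀ x : ℕ → X,
        (∃ t : ℕ → X, Antitone t ∧ IsGLB (Set.range t) 0 ∧ ∀ n, |x n| ≤ t n) →
        StatPConv p x 0) :=
  statOrderConv_to_statPConv_iff_orderConv_general p
end

section
/- In an op-continuous lattice-normed Riesz space, every statistically order convergent sequence is statistically p-convergent to the same limit. -/
open scoped Classical

lemma infinite_of_hasDensity_one (K : Set ℕ) (h : HasDensity K 1) : K.Infinite := by
  by_contra hninf
  rw [Set.not_infinite] at hninf
  have hfin := hninf
  have hbound : ∀ n : ℕ, (((Finset.range n).filter (fun k => k ∈ K)).card : ℝ)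
      ≤ (hfin.toFinset.card : ℝ) := by
    intro n
    exact_mod_cast Finset.card_le_card (fun k hk => by
      simp only [Finset.mem_filter] at hk
      exact hfin.mem_toFinset.2 hk.2)
  have h0 : Filter.Tendsto
      (fun n => (((Finset.range n).filter (fun k => k ∈ K)).card : ℝ) / n)
      Filter.atTop (nhds 0) := by
    have hge : ∀ᶠ n : ℕ in Filter.atTop,
        (0:ℝ) ≤ (((Finset.range n).filter (fun k => k ∈ K)).card : ℝ) / n := by
      filter_upwards [Filter.eventually_ge_atTop 1] with n hn
      positivity
    have hle : ∀ᶠ n : ℕ in Filter.atTop,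
        (((Finset.range n).filter (fun k => k ∈ K)).card : ℝ) / n
          ≤ (hfin.toFinset.card : ℝ) / n := by
      filter_upwards [Filter.eventually_ge_atTop 1] with n hn
      have hn' : (0:ℝ) < n := by exact_mod_cast hn
      exact div_le_div_of_nonneg_right (hbound n) hn'.le
    exact squeeze_zero' hge hle (tendsto_const_div_atTop_nhds_zero_nat _)
  exact one_ne_zero (tendsto_nhds_unique h h0)

/-- In an op-continuous lattice-normed Riesz space, every statistically order
convergent sequence is statistically p-convergent to the same limit. -/
theorem statPConv_of_statOrderConv_of_opContinuous {X E : Type*} [AddCommGroup X] [Lattice X] [CovariantClass X X (· + ·) (· ≤ ·)] [Module ℝ X]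
    [AddCommGroup E] [Lattice E] [CovariantClass E E (· + ·) (· ≤ ·)] [Module ℝ E]
    (p : X → E)
    (hp0 : ∀ v : X, 0 ≤ p v)
    (hpeq : ∀ v : X, p v = 0 ↔ v = 0)
    (hpsmul : ∀ (c : ℝ) (v : X), p (c • v) = |c| • p v)
    (hptri : ∀ v w : X, p (v + w) ≤ p v + p w)
    (hpmono : ∀ v w : X, |v| ≤ |w| → p v ≤ p w)
    (hop : ∀ u : ℕ → X,
      (∃ t : ℕ → X, Antitone t ∧ IsGLB (Set.range t) 0 ∧ ∀ n, |u n| ≤ t n) →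
      (∃ r : ℕ → E, Antitone r ∧ IsGLB (Set.range r) 0 ∧ ∀ n, |p (u n)| ≤ r n))
    (x : ℕ → X) (a : X)
    (hso : ∃ (t : ℕ → X) (K : Set ℕ), HasDensity K 1 ∧
      (∀ m ∈ K, ∀ n ∈ K, m ≤ n → t n ≤ t m) ∧
      IsGLB (t '' K) 0 ∧ ∀ n ∈ K, |x n - a| ≤ t n) :
    StatPConv p x a := by
  obtain ⟨t, K, hK, hmono, hglb, hdom⟩ := hso
  have hinf : K.Infinite := infinite_of_hasDensity_one K hK
  have hinf' : (setOf (fun n => n ∈ K)).Infinite := hinf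
  set e : ℕ → ℕ := Nat.nth (fun n => n ∈ K) with he
  have heK : ∀ j, e j ∈ K := Nat.nth_mem_of_infinite hinf'
  have hemono : Monotone e := Nat.nth_monotone hinf'
  have hrange : Set.range e = K := Nat.range_nth_of_infinite hinf'
  -- t ∘ e is antitone with glb 0
  have ht'anti : Antitone (fun j => t (e j)) := fun i j hij =>
    hmono _ (heK i) _ (heK j) (hemono hij)
  have ht'range : Set.range (fun j => t (e j)) = t '' K := by
    rw [← hrange, ← Set.range_comp]; rfl
  obtain ⟨r, hranti, hrglb, hrdom⟩ := hop (fun j => x (e j) - a)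
    ⟨fun j => t (e j), ht'anti, ht'range ▸ hglb, fun j => hdom _ (heK j)⟩
  set c : ℕ → ℕ := Nat.count (fun n => n ∈ K) with hc
  refine ⟨fun n => r (c n), K, hK, ?_, ?_, ?_⟩
  · intro m hm n hn hmn
    exact hranti (Nat.count_monotone _ hmn)
  · have : (fun n => r (c n)) '' K = Set.range r := by
      ext y
      constructor
      · rintro ⟨n, hn, rfl⟩; exact ⟨c n, rfl⟩
      · rintro ⟨j, rfl⟩
        exact ⟨e j, heK j, by
          show r (Nat.count (fun n => n ∈ K) (Nat.nth (fun n => n ∈ K) j)) = r j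
          rw [Nat.count_nth_of_infinite hinf']⟩
    rw [this]; exact hrglb
  · intro n hn
    have := hrdom (c n)
    rw [he, hc] at *
    have hen : Nat.nth (fun n => n ∈ K) (Nat.count (fun n => n ∈ K) n) = n :=
      Nat.nth_count hn
    calc p (x n - a) ≤ |p (x n - a)| := le_abs_self _
      _ = |p (x (Nat.nth (fun n => n ∈ K) (Nat.count (fun n => n ∈ K) n)) - a)| := by rw [hen]
      _ ≤ r (Nat.count (fun n => n ∈ K) n) := hrdom _
end

section
/- Bands are closed under statistical p-limits: if B is a band in a lattice-normed Riesz space (X, p, E), (bₙ) is a sequence in B, and bₙ →(st_p) x, then x ∈ B. -/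
open scoped Classical

/-- Bands are closed under statistical p-limits: if `B` is a band (a solid, order
closed subspace) of the lattice-normed Riesz space `X` and a sequence in `B` is
statistically p-convergent to `x`, then `x ∈ B`. -/
theorem statPConv_mem_band {X E : Type*} [AddCommGroup X] [Lattice X] [CovariantClass X X (· + ·) (· ≤ ·)] [Module ℝ X]
    [AddCommGroup E] [Lattice E] [CovariantClass E E (· + ·) (· ≤ ·)] [Module ℝ E]
    (p : X → E)
    (hp0 : ∀ v : X, 0 ≤ p v)
    (hpeq : ∀ v : X, p v = 0 ↔ v = 0)
    (hpsmul : ∀ (c : ℝ) (v : X), p (c • v) = |c| • p v)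
    (hptri : ∀ v w : X, p (v + w) ≤ p v + p w)
    (hpmono : ∀ v w : X, |v| ≤ |w| → p v ≤ p w)
    (B : Set X)
    (hzero : (0 : X) ∈ B)
    (hadd : ∀ u ∈ B, ∀ v ∈ B, u + v ∈ B)
    (hsmul : ∀ (c : ℝ), ∀ u ∈ B, c • u ∈ B)
    (hsolid : ∀ u ∈ B, ∀ v : X, |v| ≤ |u| → v ∈ B)
    (hordclosed : ∀ (D : Set X) (s : X), D ⊆ B → IsLUB D s → s ∈ B)
    (b : ℕ → X) (hb : ∀ n, b n ∈ B) (a : X) (hconv : StatPConv p b a) :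
    a ∈ B := by
  obtain ⟨q, K, hK, hqmono, hglb, hq⟩ := hconv
  -- K is nonempty
  have hKne : K.Nonempty := by
    by_contra h
    have hKe : K = ∅ := Set.not_nonempty_iff_eq_empty.mp h
    have : Filter.Tendsto
        (fun n => (((Finset.range n).filter (fun k => k ∈ K)).card : ℝ) / n)
        Filter.atTop (nhds 0) := by
      have : (fun n => (((Finset.range n).filter (fun k => k ∈ K)).card : ℝ) / n)
          = fun _ : ℕ => (0 : ℝ) := by
        funext n
        simp [hKe]
      rw [this]
      exact tendsto_const_nhds
    exact one_ne_zero (tendsto_nhds_unique hK this)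
  -- the sequence c n = |b n| ⊓ |a|
  set c : ℕ → X := fun n => |b n| ⊓ |a| with hc
  have hcB : ∀ n, c n ∈ B := by
    intro n
    have hbn : |b n| ∈ B := hsolid (b n) (hb n) (|b n|) (by rw [abs_abs])
    refine hsolid (|b n|) hbn (c n) ?_
    have h0 : (0 : X) ≤ c n := le_inf (abs_nonneg _) (abs_nonneg _)
    rw [abs_of_nonneg h0, abs_abs]
    exact inf_le_left
  -- key estimate: p (|a| - c n) ≤ q n for n ∈ K
  have hkey : ∀ n ∈ K, p (|a| - c n) ≤ q n := by
    intro n hn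
    refine le_trans (hpmono _ (b n - a) ?_) (hq n hn)
    have h1 : |(|b n| ⊓ |a|) - (|a| ⊓ |a|)| ≤ |(|b n| - |a|)| :=
      abs_inf_sub_inf_le_abs _ _ _
    rw [inf_idem] at h1
    calc |(|a| - c n)| = |(c n - |a|)| := abs_sub_comm _ _
      _ ≤ |(|b n| - |a|)| := h1
      _ ≤ |b n - a| := abs_abs_sub_abs_le _ _
  -- |a| is the LUB of c '' K
  have hlub : IsLUB (c '' K) |a| := by
    constructor
    · rintro y ⟨n, _, rfl⟩
      exact inf_le_right
    · intro u hu
      -- p ((|a| - u)⁺) ≤ q n for all n ∈ K, so it is ≤ 0, hence = 0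
      have hple : ∀ n ∈ K, p ((|a| - u) ⊔ 0) ≤ q n := by
        intro n hn
        refine le_trans (hpmono _ (|a| - c n) ?_) (hkey n hn)
        have hcu : c n ≤ u := hu ⟨n, hn, rfl⟩
        have h0 : (0 : X) ≤ |a| - c n := sub_nonneg.mpr inf_le_right
        have h1 : (0 : X) ≤ (|a| - u) ⊔ 0 := le_sup_right
        rw [abs_of_nonneg h1, abs_of_nonneg h0]
        exact sup_le (sub_le_sub_left hcu _) h0
      have hlb : p ((|a| - u) ⊔ 0) ∈ lowerBounds (q '' K) := by
        rintro y ⟨n, hn, rfl⟩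
        exact hple n hn
      have hle0 : p ((|a| - u) ⊔ 0) ≤ 0 := hglb.2 hlb
      have hp00 : p ((|a| - u) ⊔ 0) = 0 := le_antisymm hle0 (hp0 _)
      have : (|a| - u) ⊔ 0 = 0 := (hpeq _).mp hp00
      have : |a| - u ≤ 0 := by
        rw [← this]; exact le_sup_left
      exact sub_nonpos.mp this
  have haB : |a| ∈ B := hordclosed (c '' K) |a| (by rintro y ⟨n, _, rfl⟩; exact hcB n) hlub
  exact hsolid (|a|) haB a (by rw [abs_abs])
end
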